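/- arXiv:2004.06308 — 2 statements merged into one kernel-verified Lean document; each statement's English description precedes it below -/
import Mathlib

section
/- For every non-negative integer m, σ_m^{(2)} = (−1)^m (2^{m+2} − m − 3)/16. -/
/-- The rational numbers `σ_m^{(k)}`: `σ_m^{(1)} = (-1)^m/4` and, for `k ≥ 2`,
`σ_m^{(k)} = Σ_{i=0}^m Σ_{j=0}^i Σ_{n=1}^{k-1} (-k)^{m-i} σ_j^{(n)} σ_{i-j}^{(k-n)}`.
`sigmaC k m` is `σ_m^{(k)}` (junk value `0` for `k = 0`). -/
noncomputable def sigmaC : ℕ → ℕ → ℚ := fun k =>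
  Nat.strongRecOn k (fun k ih =>
    if k = 0 then fun _ => 0
    else if k = 1 then fun m => (-1 : ℚ) ^ m / 4
    else fun m =>
      let s : ℕ → ℕ → ℚ := fun n j => if h : n < k then ih n h j else 0
      ∑ i ∈ Finset.range (m + 1), ∑ j ∈ Finset.range (i + 1),
        ∑ n ∈ Finset.Icc 1 (k - 1), (-(k : ℚ)) ^ (m - i) * s n j * s (k - n) (i - j))

theorem sigmaC_one' (m : ℕ) : sigmaC 1 m = (-1:ℚ)^m/4 := by
  rw [sigmaC, Nat.strongRecOn, WellFounded.fix_eq]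
  norm_num

theorem sigmaC_two_eq' (m : ℕ) : sigmaC 2 m =
    ∑ i ∈ Finset.range (m + 1), ∑ j ∈ Finset.range (i + 1),
      (-(2:ℚ)) ^ (m - i) * sigmaC 1 j * sigmaC 1 (i - j) := by
  rw [sigmaC, Nat.strongRecOn, WellFounded.fix_eq]
  norm_num
  refine Finset.sum_congr rfl fun i _ => Finset.sum_congr rfl fun j _ => ?_
  rw [sigmaC_one', sigmaC_one', WellFounded.fix_eq]
  norm_num

theorem sigmaC_inner' (i : ℕ) :
    ∑ j ∈ Finset.range (i + 1), sigmaC 1 j * sigmaC 1 (i - j)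
      = ((i : ℚ) + 1) * (-1) ^ i / 16 := by
  have h : ∀ j ∈ Finset.range (i + 1),
      sigmaC 1 j * sigmaC 1 (i - j) = (-1 : ℚ) ^ i / 16 := by
    intro j hj
    rw [Finset.mem_range, Nat.lt_succ_iff] at hj
    rw [sigmaC_one', sigmaC_one', div_mul_div_comm, ← pow_add,
      Nat.add_sub_cancel' hj]
    norm_num
  rw [Finset.sum_congr rfl h, Finset.sum_const, Finset.card_range]
  ring

theorem sigmaC_key' (m : ℕ) :
    ∑ i ∈ Finset.range (m + 1), (-(2:ℚ)) ^ (m - i) * (((i : ℚ) + 1) * (-1) ^ i / 16)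
      = (-1 : ℚ) ^ m * (2 ^ (m + 2) - (m : ℚ) - 3) / 16 := by
  induction m with
  | zero => norm_num
  | succ m ih =>
    rw [Finset.sum_range_succ]
    have h : ∀ i ∈ Finset.range (m + 1),
        (-(2:ℚ)) ^ (m + 1 - i) * (((i : ℚ) + 1) * (-1) ^ i / 16)
          = -2 * ((-(2:ℚ)) ^ (m - i) * (((i : ℚ) + 1) * (-1) ^ i / 16)) := by
      intro i hi
      rw [Finset.mem_range, Nat.lt_succ_iff] at hi
      rw [Nat.succ_sub hi, pow_succ]
      ring
    rw [Finset.sum_congr rfl h, ← Finset.mul_sum, ih, Nat.sub_self]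
    push_cast
    ring

/-- `σ_m^{(2)} = (-1)^m (2^{m+2} - m - 3)/16`. -/
theorem sigmaC_two (m : ℕ) :
    sigmaC 2 m = (-1 : ℚ) ^ m * (2 ^ (m + 2) - (m : ℚ) - 3) / 16 := by
  rw [sigmaC_two_eq', ← sigmaC_key' m]
  refine Finset.sum_congr rfl fun i _ => ?_
  rw [← sigmaC_inner' i, Finset.mul_sum]
  exact Finset.sum_congr rfl fun j _ => by ring
end

section
/- For all sufficiently large real ν the derivative φ_ν′ has a smallest positive zero r*(φ_ν), and lim_{ν→+∞} r*(φ_ν)/(4(ν+1)) = 1. -/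
set_option maxHeartbeats 1000000

/-- The normalised Bessel function
`φ_ν(z) = z Σ_{m=0}^∞ ((-1)^m Γ(ν+1)/(4^m m! Γ(ν+m+1))) z^m`
(equal to `2^ν Γ(ν+1) z^{1-ν/2} J_ν(√z)` for `z > 0`). -/
noncomputable def phi (ν : ℝ) (z : ℝ) : ℝ :=
  z * ∑' m : ℕ, ((-1 : ℝ) ^ m * Real.Gamma (ν + 1) /
    (4 ^ m * m.factorial * Real.Gamma (ν + m + 1))) * z ^ m

/-- The radius of starlikeness `r*(φ_ν)`, the smallest positive zero of `φ_ν'`. -/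
noncomputable def rStarPhi (ν : ℝ) : ℝ := sInf {x : ℝ | 0 < x ∧ deriv (phi ν) x = 0}

open Real Filter Finset



noncomputable def cc (ν : ℝ) (m : ℕ) : ℝ :=
  (-1 : ℝ) ^ m * Real.Gamma (ν + 1) / (4 ^ m * m.factorial * Real.Gamma (ν + m + 1))

noncomputable def D (ν x : ℝ) : ℝ := ∑' m : ℕ, ((m : ℝ) + 1) * cc ν m * x ^ m

lemma Gamma_prod {ν : ℝ} (hν : (0:ℝ) < ν + 1) (m : ℕ) :
    Real.Gamma (ν + m + 1) = Real.Gamma (ν + 1) * ∏ i ∈ Finset.range m, (ν + i + 1) := by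
  induction m with
  | zero => simp
  | succ n ih =>
    have h : (ν + (n + 1 : ℕ) + 1 : ℝ) = (ν + n + 1) + 1 := by push_cast; ring
    have hpos : (0:ℝ) < ν + n + 1 := by
      have : (0:ℝ) ≤ n := Nat.cast_nonneg n
      linarith
    rw [h, Real.Gamma_add_one (ne_of_gt hpos), ih, Finset.prod_range_succ]
    ring

lemma abs_cc_le {ν : ℝ} (hν : 1 ≤ ν) (m : ℕ) :
    |cc ν m| ≤ 1 / m.factorial := by
  have h1 : (0:ℝ) < Real.Gamma (ν + 1) := Real.Gamma_pos_of_pos (by linarith)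
  have h2 : (0:ℝ) < Real.Gamma (ν + m + 1) := by
    apply Real.Gamma_pos_of_pos
    have : (0:ℝ) ≤ m := Nat.cast_nonneg m
    linarith
  have hprod : (1:ℝ) ≤ ∏ i ∈ Finset.range m, (ν + i + 1) := by
    calc (1:ℝ) = ∏ _i ∈ Finset.range m, (1:ℝ) := by simp
      _ ≤ _ := by
        apply Finset.prod_le_prod (by intros; norm_num)
        intro i _
        have : (0:ℝ) ≤ i := Nat.cast_nonneg i
        linarith
  have hGam : Real.Gamma (ν + 1) ≤ Real.Gamma (ν + m + 1) := by
    rw [Gamma_prod (by linarith) m]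
    nlinarith
  have hfac : (0:ℝ) < m.factorial := by positivity
  have h4 : (1:ℝ) ≤ 4 ^ m := one_le_pow₀ (by norm_num : (1:ℝ) ≤ 4)
  rw [cc, abs_div, abs_mul, abs_pow, abs_neg, abs_one, one_pow, one_mul,
    abs_of_pos h1, abs_of_pos (by positivity : (0:ℝ) < 4 ^ m * m.factorial * Real.Gamma (ν + m + 1))]
  rw [div_le_div_iff₀ (by positivity) (by positivity)]
  calc Real.Gamma (ν+1) * m.factorial ≤ Real.Gamma (ν+m+1) * m.factorial := by nlinarith
    _ ≤ (4^m * m.factorial * Real.Gamma (ν+m+1)) * 1 := by nlinarith [mul_le_mul_of_nonneg_right h4 (le_of_lt (mul_pos hfac h2))]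
    _ = _ := by ring



lemma succ_le_two_pow (m : ℕ) : ((m:ℝ) + 1) ≤ 2 ^ m := by
  have h := (Nat.lt_two_pow_self (n := m))
  have h2 : (m + 1 : ℕ) ≤ 2 ^ m := h
  exact_mod_cast h2

lemma summable_aux (r : ℝ) : Summable (fun m : ℕ => ((m:ℝ) + 1) / m.factorial * r ^ m) := by
  apply Summable.of_norm_bounded (g := fun m : ℕ => (2 * |r|) ^ m / m.factorial)
    (Real.summable_pow_div_factorial _)
  intro m
  have hfac : (0:ℝ) < m.factorial := by positivity
  have h1 : ((m:ℝ) + 1) ≤ 2 ^ m := succ_le_two_pow m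
  calc ‖((m:ℝ) + 1) / m.factorial * r ^ m‖ = ((m:ℝ)+1) / m.factorial * |r| ^ m := by
        simp only [Real.norm_eq_abs, abs_mul, abs_div, abs_pow]
        rw [abs_of_nonneg (by positivity : (0:ℝ) ≤ (m:ℝ)+1), Nat.abs_cast]
    _ ≤ (2:ℝ) ^ m / m.factorial * |r| ^ m := by
        apply mul_le_mul_of_nonneg_right _ (by positivity)
        exact div_le_div_of_nonneg_right h1 hfac.le
    _ = (2 * |r|) ^ m / m.factorial := by rw [mul_pow]; ring

lemma summable_D {ν : ℝ} (hν : 1 ≤ ν) (x : ℝ) :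
    Summable (fun m : ℕ => ((m : ℝ) + 1) * cc ν m * x ^ m) := by
  apply Summable.of_norm_bounded ((summable_aux |x|).abs)
  intro m
  have h := abs_cc_le hν m
  rw [Real.norm_eq_abs, abs_mul, abs_mul, abs_pow,
    abs_of_nonneg (by positivity : (0:ℝ) ≤ (m:ℝ)+1)]
  calc ((m:ℝ)+1) * |cc ν m| * |x|^m ≤ ((m:ℝ)+1) * (1/m.factorial) * |x|^m := by
        apply mul_le_mul_of_nonneg_right
          (mul_le_mul_of_nonneg_left h (by positivity)) (by positivity)
    _ = ((m:ℝ)+1)/m.factorial * |x|^m := by ring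
    _ ≤ |((m:ℝ)+1)/m.factorial * |x|^m| := le_abs_self _



lemma phi_eq (ν z : ℝ) : phi ν z = ∑' m : ℕ, cc ν m * z ^ (m+1) := by
  rw [phi, ← tsum_mul_left]
  exact tsum_congr fun m => by simp only [cc]; ring

lemma hasDerivAt_phi {ν : ℝ} (hν : 1 ≤ ν) (x : ℝ) : HasDerivAt (phi ν) (D ν x) x := by
  set R : ℝ := |x| + 1 with hR
  have hxR : x ∈ Metric.ball (0:ℝ) R := by
    simp only [Metric.mem_ball, Real.dist_eq, sub_zero, hR]
    linarith [abs_nonneg x]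
  have hu : Summable (fun m : ℕ => ((m:ℝ) + 1) / m.factorial * R ^ m) := summable_aux R
  have key : HasDerivAt (fun z => ∑' m : ℕ, cc ν m * z ^ (m+1))
      (∑' m : ℕ, cc ν m * ((m+1 : ℕ) * x ^ m)) x := by
    apply hasDerivAt_tsum_of_isPreconnected hu Metric.isOpen_ball
      (convex_ball (0:ℝ) R).isPreconnected
      (g := fun m z => cc ν m * z ^ (m+1))
      (g' := fun m y => cc ν m * ((m+1 : ℕ) * y ^ m))
      (fun m y _ => (hasDerivAt_pow (m+1) y).const_mul (cc ν m)) ?_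
      (by simp only [Metric.mem_ball, Real.dist_eq, sub_zero, hR, abs_zero]
          linarith [abs_nonneg x] : (0:ℝ) ∈ Metric.ball (0:ℝ) R) ?_ hxR
    · intro m y hy
      have hyR : |y| ≤ R := by
        have := mem_ball_zero_iff.mp hy
        rw [Real.norm_eq_abs] at this
        linarith
      have h1 : |cc ν m| ≤ 1 / m.factorial := abs_cc_le hν m
      have hyRm : |y| ^ m ≤ R ^ m := pow_le_pow_left₀ (abs_nonneg y) hyR m
      have hcast : |((m+1:ℕ):ℝ)| = (m:ℝ)+1 := by
        push_cast
        rw [abs_of_nonneg (by positivity)]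
      rw [Real.norm_eq_abs]
      calc |cc ν m * (((m+1:ℕ):ℝ) * y^m)| ≤ (1/m.factorial) * (((m:ℝ)+1) * R^m) := by
            rw [abs_mul, abs_mul, abs_pow, hcast]
            gcongr
        _ = ((m:ℝ)+1)/m.factorial * R^m := by ring
    · simp [summable_zero]
  have hfun : phi ν = fun z => ∑' m : ℕ, cc ν m * z ^ (m+1) := funext (phi_eq ν)
  have hval : D ν x = ∑' m : ℕ, cc ν m * ((m+1 : ℕ) * x ^ m) :=
    tsum_congr fun m => by push_cast; ring
  rw [hfun, hval]
  exact key



lemma cast_le_two_pow (m : ℕ) : ((m:ℝ)) ≤ 2 ^ m := by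
  have := succ_le_two_pow m; linarith

lemma summable_aux2 (r : ℝ) : Summable (fun m : ℕ => ((m:ℝ) + 1) * m / m.factorial * r ^ m) := by
  apply Summable.of_norm_bounded (g := fun m : ℕ => (4 * |r|) ^ m / m.factorial)
    (Real.summable_pow_div_factorial _)
  intro m
  have hfac : (0:ℝ) < m.factorial := by positivity
  have h1 : ((m:ℝ) + 1) * m ≤ 4 ^ m := by
    have a := succ_le_two_pow m
    have b := cast_le_two_pow m
    have : (4:ℝ) ^ m = 2 ^ m * 2 ^ m := by rw [← mul_pow]; norm_num
    rw [this]
    have hm : (0:ℝ) ≤ m := Nat.cast_nonneg m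
    nlinarith
  rw [Real.norm_eq_abs, abs_mul, abs_div, abs_mul, abs_pow, Nat.abs_cast,
    abs_of_nonneg (by positivity : (0:ℝ) ≤ (m:ℝ)+1), Nat.abs_cast]
  calc ((m:ℝ)+1) * m / m.factorial * |r| ^ m ≤ (4:ℝ)^m / m.factorial * |r| ^ m := by
        apply mul_le_mul_of_nonneg_right _ (by positivity)
        exact div_le_div_of_nonneg_right h1 hfac.le
    _ = (4 * |r|) ^ m / m.factorial := by rw [mul_pow]; ring

lemma continuous_D {ν : ℝ} (hν : 1 ≤ ν) : Continuous (D ν) := by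
  rw [continuous_iff_continuousAt]
  intro x
  set R : ℝ := |x| + 1 with hR
  have hR1 : (1:ℝ) ≤ R := by rw [hR]; linarith [abs_nonneg x]
  have hxR : x ∈ Metric.ball (0:ℝ) R := by
    simp only [Metric.mem_ball, Real.dist_eq, sub_zero, hR]
    linarith [abs_nonneg x]
  have h0R : (0:ℝ) ∈ Metric.ball (0:ℝ) R := by
    simp only [Metric.mem_ball, Real.dist_eq, sub_zero, abs_zero]
    linarith
  have hu : Summable (fun m : ℕ => ((m:ℝ) + 1) * m / m.factorial * R ^ m) := summable_aux2 R
  have key : HasDerivAt (fun z => ∑' m : ℕ, ((m:ℝ)+1) * cc ν m * z ^ m)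
      (∑' m : ℕ, ((m:ℝ)+1) * cc ν m * ((m : ℕ) * x ^ (m-1))) x := by
    apply hasDerivAt_tsum_of_isPreconnected hu Metric.isOpen_ball
      (convex_ball (0:ℝ) R).isPreconnected
      (g := fun (m : ℕ) (z : ℝ) => ((m:ℝ)+1) * cc ν m * z ^ m)
      (g' := fun (m : ℕ) (y : ℝ) => ((m:ℝ)+1) * cc ν m * ((m : ℝ) * y ^ (m-1)))
      (fun m y _ => (hasDerivAt_pow m y).const_mul (((m:ℝ)+1) * cc ν m)) ?_ h0R ?_ hxR
    · intro m y hy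
      have hyR : |y| ≤ R := by
        have := mem_ball_zero_iff.mp hy
        rw [Real.norm_eq_abs] at this
        linarith
      have h1 : |cc ν m| ≤ 1 / m.factorial := abs_cc_le hν m
      have hyRm : |y| ^ (m-1) ≤ R ^ m := by
        calc |y| ^ (m-1) ≤ R ^ (m-1) := pow_le_pow_left₀ (abs_nonneg y) hyR _
          _ ≤ R ^ m := pow_le_pow_right₀ hR1 (Nat.sub_le m 1)
      rw [Real.norm_eq_abs, abs_mul, abs_mul, abs_mul, abs_pow, Nat.abs_cast,
        abs_of_nonneg (by positivity : (0:ℝ) ≤ (m:ℝ)+1)]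
      calc ((m:ℝ)+1) * |cc ν m| * ((m:ℝ) * |y| ^ (m-1))
          ≤ ((m:ℝ)+1) * (1/m.factorial) * ((m:ℝ) * R ^ m) := by gcongr
        _ = ((m:ℝ)+1) * m / m.factorial * R ^ m := by ring
    · apply summable_of_ne_finset_zero (s := {0})
      intro m hm
      have : m ≠ 0 := by simpa using hm
      simp [zero_pow this]
  exact (key.congr_deriv rfl).continuousAt


-- f(t) = (1-t)e^{-t} as a series
lemma summable_exp_series (t : ℝ) : Summable (fun m : ℕ => ((m:ℝ)+1) * (-1)^m * t^m / m.factorial) := by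
  apply Summable.of_norm_bounded (g := fun m : ℕ => (2 * |t|) ^ m / m.factorial)
    (Real.summable_pow_div_factorial _)
  intro m
  have h1 : ((m:ℝ) + 1) ≤ 2 ^ m := by
    have := (Nat.lt_two_pow_self (n := m))
    have h2 : (m + 1 : ℕ) ≤ 2 ^ m := this
    exact_mod_cast h2
  rw [Real.norm_eq_abs, abs_div, abs_mul, abs_mul, abs_pow, abs_pow, abs_neg, abs_one,
    one_pow, mul_one, abs_of_nonneg (by positivity : (0:ℝ) ≤ (m:ℝ)+1), Nat.abs_cast]
  rw [mul_pow]
  have hfac : (0:ℝ) < m.factorial := by positivity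
  apply div_le_div_of_nonneg_right _ hfac.le
  exact mul_le_mul_of_nonneg_right h1 (by positivity)

lemma exp_series (t : ℝ) :
    ∑' m : ℕ, ((m:ℝ)+1) * (-1)^m * t^m / m.factorial = (1 - t) * Real.exp (-t) := by
  have hexp : ∀ x : ℝ, ∑' m : ℕ, x ^ m / m.factorial = Real.exp x := by
    intro x
    rw [Real.exp_eq_exp_ℝ, NormedSpace.exp_eq_tsum_div]
  have hs1 : Summable (fun m : ℕ => (-t) ^ m / m.factorial) := Real.summable_pow_div_factorial _
  have hs2 : Summable (fun m : ℕ => (m:ℝ) * (-t) ^ m / m.factorial) := by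
    apply Summable.of_norm_bounded (g := fun m : ℕ => (2 * |t|) ^ m / m.factorial)
      (Real.summable_pow_div_factorial _)
    intro m
    have h1 : ((m:ℝ)) ≤ 2 ^ m := by exact_mod_cast ((Nat.lt_two_pow_self (n := m))).le
    rw [Real.norm_eq_abs, abs_div, abs_mul, abs_pow, abs_neg, Nat.abs_cast, Nat.abs_cast, mul_pow]
    apply div_le_div_of_nonneg_right _ (by positivity : (0:ℝ) < m.factorial).le
    exact mul_le_mul h1 le_rfl (by positivity) (by positivity)
  have split : ∀ m : ℕ, ((m:ℝ)+1) * (-1)^m * t^m / m.factorial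
      = (-t) ^ m / m.factorial + (m:ℝ) * (-t) ^ m / m.factorial := by
    intro m
    rw [neg_pow]
    ring
  rw [tsum_congr split, Summable.tsum_add hs1 hs2, hexp]
  have h2 : ∑' m : ℕ, (m:ℝ) * (-t) ^ m / m.factorial = -t * Real.exp (-t) := by
    rw [Summable.tsum_eq_zero_add hs2]
    simp only [Nat.cast_zero, zero_mul, zero_div, zero_add]
    rw [tsum_congr (fun n : ℕ => by push_cast; ring_nf :
      ∀ n : ℕ, ((n+1 : ℕ):ℝ) * (-t) ^ (n+1) / ((n+1).factorial : ℝ)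
        = ((n:ℝ)+1) * (-t) ^ (n+1) / (n+1).factorial)]
    have : ∀ n : ℕ, ((n:ℝ)+1) * (-t) ^ (n+1) / (n+1).factorial = (-t) * ((-t)^n / n.factorial) := by
      intro n
      rw [Nat.factorial_succ]
      have hfac : ((n.factorial : ℝ)) ≠ 0 := by positivity
      have : (((n+1) * n.factorial : ℕ) : ℝ) = ((n:ℝ)+1) * n.factorial := by push_cast; ring
      rw [this]
      field_simp
      ring
    calc ∑' n : ℕ, ((n:ℝ)+1) * (-t) ^ (n+1) / (n+1).factorial
        = ∑' n : ℕ, (-t) * ((-t)^n / n.factorial) := tsum_congr this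
      _ = (-t) * ∑' n : ℕ, (-t)^n / n.factorial := tsum_mul_left
      _ = -t * Real.exp (-t) := by rw [hexp]
  rw [h2]
  ring


noncomputable def bb (ν : ℝ) (m : ℕ) : ℝ :=
  Real.Gamma (ν + 1) * (ν + 1) ^ m / Real.Gamma (ν + m + 1)


lemma bb_prod {ν : ℝ} (hν : 1 ≤ ν) (m : ℕ) :
    bb ν m = ∏ i ∈ Finset.range m, ((ν + 1) / (ν + i + 1)) := by
  have h1 : (0:ℝ) < Real.Gamma (ν + 1) := Real.Gamma_pos_of_pos (by linarith)
  have h2 : (0:ℝ) < ∏ i ∈ Finset.range m, (ν + i + 1) := by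
    apply Finset.prod_pos
    intro i _
    have : (0:ℝ) ≤ i := Nat.cast_nonneg i
    linarith
  rw [bb, Gamma_prod (by linarith) m, Finset.prod_div_distrib, Finset.prod_const,
    Finset.card_range]
  field_simp

lemma bb_nonneg {ν : ℝ} (hν : 1 ≤ ν) (m : ℕ) : 0 ≤ bb ν m := by
  rw [bb_prod hν]
  apply Finset.prod_nonneg
  intro i _
  have : (0:ℝ) ≤ i := Nat.cast_nonneg i
  positivity

lemma bb_le_one {ν : ℝ} (hν : 1 ≤ ν) (m : ℕ) : bb ν m ≤ 1 := by
  rw [bb_prod hν]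
  apply Finset.prod_le_one
  · intro i _
    have : (0:ℝ) ≤ i := Nat.cast_nonneg i
    positivity
  · intro i _
    have h0 : (0:ℝ) ≤ i := Nat.cast_nonneg i
    rw [div_le_one (by linarith)]
    linarith

lemma one_sub_prod_le (f : ℕ → ℝ) (h0 : ∀ i, 0 ≤ f i) (h1 : ∀ i, f i ≤ 1) (m : ℕ) :
    1 - ∏ i ∈ Finset.range m, f i ≤ ∑ i ∈ Finset.range m, (1 - f i) := by
  induction m with
  | zero => simp
  | succ n ih =>
    rw [Finset.prod_range_succ, Finset.sum_range_succ]
    have hp0 : 0 ≤ ∏ i ∈ Finset.range n, f i := Finset.prod_nonneg fun i _ => h0 i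
    have hp1 : ∏ i ∈ Finset.range n, f i ≤ 1 :=
      Finset.prod_le_one (fun i _ => h0 i) (fun i _ => h1 i)
    nlinarith [h0 n, h1 n]

lemma one_sub_bb_le {ν : ℝ} (hν : 1 ≤ ν) (m : ℕ) : 1 - bb ν m ≤ (m:ℝ)^2 / ν := by
  have hν0 : (0:ℝ) < ν := by linarith
  rw [bb_prod hν]
  have h0 : ∀ i : ℕ, 0 ≤ (ν + 1) / (ν + (i:ℝ) + 1) := by
    intro i
    have : (0:ℝ) ≤ i := Nat.cast_nonneg i
    positivity
  have h1 : ∀ i : ℕ, (ν + 1) / (ν + (i:ℝ) + 1) ≤ 1 := by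
    intro i
    have : (0:ℝ) ≤ i := Nat.cast_nonneg i
    rw [div_le_one (by linarith)]
    linarith
  calc 1 - ∏ i ∈ Finset.range m, ((ν + 1) / (ν + i + 1))
      ≤ ∑ i ∈ Finset.range m, (1 - (ν + 1) / (ν + (i:ℝ) + 1)) := one_sub_prod_le _ h0 h1 m
    _ ≤ ∑ _i ∈ Finset.range m, ((m:ℝ) / ν) := by
        apply Finset.sum_le_sum
        intro i hi
        have hin : (i:ℝ) ≤ m := by
          exact_mod_cast (Finset.mem_range.mp hi).le
        have hi0 : (0:ℝ) ≤ i := Nat.cast_nonneg i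
        have key : 1 - (ν + 1) / (ν + (i:ℝ) + 1) = (i:ℝ) / (ν + i + 1) := by
          field_simp
          ring
        rw [key]
        calc (i:ℝ) / (ν + i + 1) ≤ (i:ℝ) / ν := by
              apply div_le_div_of_nonneg_left hi0 hν0
              linarith
          _ ≤ (m:ℝ) / ν := by
              apply div_le_div_of_nonneg_right hin hν0.le
    _ = (m:ℝ) * ((m:ℝ)/ν) := by rw [Finset.sum_const, Finset.card_range]; simp [nsmul_eq_mul]
    _ = (m:ℝ)^2 / ν := by ring



lemma term_eq {ν : ℝ} (hν : 1 ≤ ν) (t : ℝ) (m : ℕ) :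
    ((m:ℝ)+1) * cc ν m * (4*(ν+1)*t)^m
      = ((m:ℝ)+1) * (-1)^m * bb ν m * t^m / m.factorial := by
  have h1 : (0:ℝ) < Real.Gamma (ν + 1) := Real.Gamma_pos_of_pos (by linarith)
  have h2 : (0:ℝ) < Real.Gamma (ν + m + 1) := by
    apply Real.Gamma_pos_of_pos
    have : (0:ℝ) ≤ m := Nat.cast_nonneg m
    linarith
  have hfac : ((m.factorial:ℝ)) ≠ 0 := by positivity
  have h4 : ((4:ℝ))^m ≠ 0 := by positivity
  rw [cc, bb, mul_pow, mul_pow]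
  field_simp

theorem key_est {ν t : ℝ} (hν : 1 ≤ ν) (ht0 : 0 ≤ t) (ht2 : t ≤ 2) :
    |D ν (4*(ν+1)*t) - (1-t) * Real.exp (-t)| ≤ Real.exp 16 / ν := by
  have hν0 : (0:ℝ) < ν := by linarith
  have hsum1 := summable_D hν (4*(ν+1)*t)
  have hsum2 := summable_exp_series t
  have hdiff : Summable (fun m : ℕ => ((m:ℝ)+1) * cc ν m * (4*(ν+1)*t)^m
      - ((m:ℝ)+1) * (-1)^m * t^m / m.factorial) := hsum1.sub hsum2
  have hbound : ∀ m : ℕ, |((m:ℝ)+1) * cc ν m * (4*(ν+1)*t)^m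
      - ((m:ℝ)+1) * (-1)^m * t^m / m.factorial| ≤ (1/ν) * (16^m / m.factorial) := by
    intro m
    rw [term_eq hν t m]
    have heq : ((m:ℝ)+1) * (-1)^m * bb ν m * t^m / m.factorial
        - ((m:ℝ)+1) * (-1)^m * t^m / m.factorial
        = ((m:ℝ)+1) * (-1)^m * t^m * (bb ν m - 1) / m.factorial := by ring
    rw [heq, abs_div, abs_mul, abs_mul, abs_mul, abs_pow, abs_pow, abs_neg, abs_one, one_pow,
      mul_one, abs_of_nonneg (by positivity : (0:ℝ) ≤ (m:ℝ)+1), abs_of_nonneg ht0, Nat.abs_cast]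
    have habs : |bb ν m - 1| = 1 - bb ν m := by
      rw [abs_sub_comm, abs_of_nonneg (by linarith [bb_le_one hν m])]
    rw [habs]
    have hm2 : ((m:ℝ))^2 ≤ 4^m := by
      have h := succ_le_two_pow m
      have hm : (0:ℝ) ≤ m := Nat.cast_nonneg m
      have h' : ((m:ℝ)) ≤ 2^m := by linarith
      calc ((m:ℝ))^2 = (m:ℝ) * m := sq (m:ℝ) ▸ by ring
        _ ≤ 2^m * 2^m := by nlinarith
        _ = 4^m := by rw [← mul_pow]; norm_num
    have htm : t^m ≤ 2^m := pow_le_pow_left₀ ht0 ht2 m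
    have hfac : (0:ℝ) < m.factorial := by positivity
    have hb1 : 1 - bb ν m ≤ (m:ℝ)^2/ν := one_sub_bb_le hν m
    have hb0 : 0 ≤ 1 - bb ν m := by linarith [bb_le_one hν m]
    have step1 : ((m:ℝ)+1) * t^m * (1 - bb ν m) ≤ 2^m * 2^m * ((m:ℝ)^2/ν) := by
      apply mul_le_mul
      · apply mul_le_mul (succ_le_two_pow m) htm (by positivity) (by positivity)
      · exact hb1
      · exact hb0
      · positivity
    have main : ((m:ℝ)+1) * t^m * (1 - bb ν m) * ν ≤ 16^m := by
      calc ((m:ℝ)+1) * t^m * (1 - bb ν m) * ν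
          ≤ 2^m * 2^m * ((m:ℝ)^2/ν) * ν := mul_le_mul_of_nonneg_right step1 hν0.le
        _ = 2^m * 2^m * (m:ℝ)^2 := by field_simp
        _ ≤ 2^m * 2^m * 4^m := mul_le_mul_of_nonneg_left hm2 (by positivity)
        _ = 16^m := by rw [← mul_pow, ← mul_pow]; norm_num
    have hrhs : (1/ν) * ((16:ℝ)^m/m.factorial) = 16^m/(ν*m.factorial) := by
      field_simp
    rw [hrhs, div_le_div_iff₀ hfac (by positivity)]
    calc ((m:ℝ)+1) * t^m * (1 - bb ν m) * (ν * m.factorial)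
        = (((m:ℝ)+1) * t^m * (1 - bb ν m) * ν) * m.factorial := by ring
      _ ≤ 16^m * m.factorial := mul_le_mul_of_nonneg_right main hfac.le
  have h16 : ∑' m : ℕ, (1/ν) * ((16:ℝ)^m / m.factorial) = Real.exp 16 / ν := by
    rw [tsum_mul_left]
    rw [Real.exp_eq_exp_ℝ, NormedSpace.exp_eq_tsum_div]
    ring
  set F : ℕ → ℝ := fun m => ((m:ℝ)+1) * cc ν m * (4*(ν+1)*t)^m
      - ((m:ℝ)+1) * (-1)^m * t^m / m.factorial with hF
  have habs : |∑' m : ℕ, F m| ≤ ∑' m : ℕ, |F m| := by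
    have h := norm_tsum_le_tsum_norm (f := F) (by simpa [Real.norm_eq_abs] using hdiff.abs)
    simpa [Real.norm_eq_abs] using h
  calc |D ν (4*(ν+1)*t) - (1-t) * Real.exp (-t)|
      = |∑' m : ℕ, F m| := by
        rw [D, ← exp_series t, ← Summable.tsum_sub hsum1 hsum2]
    _ ≤ ∑' m : ℕ, |F m| := habs
    _ ≤ ∑' m : ℕ, (1/ν) * ((16:ℝ)^m / m.factorial) := by
        apply Summable.tsum_le_tsum (fun m => hbound m) hdiff.abs
        exact (Real.summable_pow_div_factorial 16).mul_left _
    _ = Real.exp 16 / ν := h16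



lemma exp_neg_one_gt : (1/3 : ℝ) ≤ Real.exp (-1) := by
  rw [Real.exp_neg]
  have h := Real.exp_one_lt_d9
  have hpos := Real.exp_pos 1
  rw [le_inv_comm₀ (by norm_num) hpos]
  linarith

lemma exp_neg_two_gt : (1/9 : ℝ) ≤ Real.exp (-2) := by
  have h : Real.exp (-2 : ℝ) = Real.exp (-1) * Real.exp (-1) := by
    rw [← Real.exp_add]
    norm_num
  have h1 := exp_neg_one_gt
  have hp := Real.exp_pos (-1 : ℝ)
  nlinarith

lemma D_bounds {δ ν : ℝ} (hδ0 : 0 < δ) (hδ : δ ≤ 1/2) (hν1 : 1 ≤ ν)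
    (hν : 10 * Real.exp 16 / δ ≤ ν) :
    (∀ z, 0 ≤ z → z ≤ 4*(ν+1)*(1-δ) → 0 < D ν z) ∧ D ν (4*(ν+1)*(1+δ)) < 0 := by
  have hν0 : (0:ℝ) < ν := by linarith
  have herr : Real.exp 16 / ν ≤ δ / 10 := by
    rw [div_le_div_iff₀ hν0 (by norm_num)]
    have h1 : 10 * Real.exp 16 ≤ ν * δ := (div_le_iff₀ hδ0).mp hν
    linarith
  have h4ν : (0:ℝ) < 4*(ν+1) := by linarith
  constructor
  · intro z hz0 hzL
    set t := z / (4*(ν+1)) with htdef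
    have ht0 : 0 ≤ t := div_nonneg hz0 h4ν.le
    have htz : z = 4*(ν+1)*t := by
      rw [htdef, mul_div_cancel₀]
      exact h4ν.ne'
    have ht1 : t ≤ 1 - δ := by
      rw [htdef, div_le_iff₀ h4ν]
      linarith [hzL]
    have ht2 : t ≤ 2 := by linarith
    have hk := (key_est hν1 ht0 ht2).trans herr
    have he : (1/3 : ℝ) ≤ Real.exp (-t) := by
      apply exp_neg_one_gt.trans
      apply Real.exp_le_exp.mpr
      linarith
    have hf : δ * (1/3) ≤ (1-t) * Real.exp (-t) := by
      apply mul_le_mul (by linarith) he (by norm_num) (by linarith)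
    have := (abs_le.mp hk).1
    rw [← htz] at this
    nlinarith
  · set t := 1 + δ with htdef
    have ht0 : (0:ℝ) ≤ t := by rw [htdef]; linarith
    have ht2 : t ≤ 2 := by rw [htdef]; linarith
    have hk := (key_est hν1 ht0 ht2).trans herr
    have he : (1/9 : ℝ) ≤ Real.exp (-t) := by
      apply exp_neg_two_gt.trans
      apply Real.exp_le_exp.mpr
      rw [htdef]; linarith
    have := (abs_le.mp hk).2
    have hf : (1 - t) * Real.exp (-t) ≤ -(δ/9) := by
      rw [htdef]
      have : (1 - (1+δ)) * Real.exp (-(1+δ)) = -(δ * Real.exp (-(1+δ))) := by ring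
      rw [this]
      have h2 : δ/9 ≤ δ * Real.exp (-(1+δ)) := by
        have := mul_le_mul_of_nonneg_left he hδ0.le
        calc δ/9 = δ * (1/9) := by ring
          _ ≤ _ := this
      rw [htdef] at *
      linarith
    nlinarith

lemma main_struct {δ ν : ℝ} (hδ0 : 0 < δ) (hδ : δ ≤ 1/2) (hν1 : 1 ≤ ν)
    (hν : 10 * Real.exp 16 / δ ≤ ν) :
    IsLeast {x : ℝ | 0 < x ∧ deriv (phi ν) x = 0}
      (sInf {x : ℝ | 0 < x ∧ deriv (phi ν) x = 0}) ∧
    4*(ν+1)*(1-δ) ≤ sInf {x : ℝ | 0 < x ∧ deriv (phi ν) x = 0} ∧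
    sInf {x : ℝ | 0 < x ∧ deriv (phi ν) x = 0} ≤ 4*(ν+1)*(1+δ) := by
  have hd : ∀ x, deriv (phi ν) x = D ν x := fun x => (hasDerivAt_phi hν1 x).deriv
  obtain ⟨hA, hB⟩ := D_bounds hδ0 hδ hν1 hν
  set L := 4*(ν+1)*(1-δ) with hLdef
  set U := 4*(ν+1)*(1+δ) with hUdef
  have hL0 : (0:ℝ) < L := by rw [hLdef]; nlinarith
  have hLU : L ≤ U := by rw [hLdef, hUdef]; nlinarith
  have hDL : 0 < D ν L := hA L hL0.le le_rfl
  have hcont : Continuous (D ν) := continuous_D hν1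
  obtain ⟨z, hzmem, hz0⟩ : ∃ z ∈ Set.Icc L U, D ν z = 0 := by
    have h0 : (0:ℝ) ∈ Set.Icc (D ν U) (D ν L) := ⟨hB.le, hDL.le⟩
    have him := intermediate_value_Icc' hLU hcont.continuousOn h0
    obtain ⟨z, hz, hz0⟩ := him
    exact ⟨z, hz, hz0⟩
  have hSeq : {x : ℝ | 0 < x ∧ deriv (phi ν) x = 0} = {x : ℝ | L ≤ x ∧ D ν x = 0} := by
    ext x
    simp only [Set.mem_setOf_eq, hd]
    constructor
    · rintro ⟨hx0, hxD⟩
      refine ⟨?_, hxD⟩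
      by_contra h
      push_neg at h
      exact (hA x hx0.le h.le).ne' hxD
    · rintro ⟨hxL, hxD⟩
      exact ⟨lt_of_lt_of_le hL0 hxL, hxD⟩
  have hclosed : IsClosed {x : ℝ | L ≤ x ∧ D ν x = 0} := by
    have : {x : ℝ | L ≤ x ∧ D ν x = 0} = Set.Ici L ∩ D ν ⁻¹' {0} := by
      ext x; simp [Set.mem_Ici]
    rw [this]
    exact isClosed_Ici.inter (isClosed_singleton.preimage hcont)
  have hne : {x : ℝ | L ≤ x ∧ D ν x = 0}.Nonempty := ⟨z, hzmem.1, hz0⟩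
  have hbdd : BddBelow {x : ℝ | L ≤ x ∧ D ν x = 0} := ⟨L, fun x hx => hx.1⟩
  have hmem := hclosed.csInf_mem hne hbdd
  rw [hSeq]
  refine ⟨⟨hmem, fun x hx => csInf_le hbdd hx⟩, hmem.1, ?_⟩
  exact (csInf_le hbdd ⟨hzmem.1, hz0⟩).trans hzmem.2



/-- For all sufficiently large `ν` the derivative `φ_ν'` has a smallest positive zero
`r*(φ_ν)`, and `r*(φ_ν)/(4(ν+1)) → 1` as `ν → +∞`. -/
theorem rStarPhi_tendsto :
    (∃ ν₀ : ℝ, ∀ ν : ℝ, ν₀ ≤ ν →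
      IsLeast {x : ℝ | 0 < x ∧ deriv (phi ν) x = 0} (rStarPhi ν)) ∧
    Filter.Tendsto (fun ν : ℝ => rStarPhi ν / (4 * (ν + 1))) Filter.atTop (nhds 1) := by
  constructor
  · refine ⟨max 1 (20 * Real.exp 16), fun ν h => ?_⟩
    have hν1 : (1:ℝ) ≤ ν := (le_max_left _ _).trans h
    have hν2 : 10 * Real.exp 16 / (1/2 : ℝ) ≤ ν := by
      have : 10 * Real.exp 16 / (1/2 : ℝ) = 20 * Real.exp 16 := by ring
      rw [this]
      exact (le_max_right _ _).trans h
    exact (main_struct (by norm_num) le_rfl hν1 hν2).1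
  · rw [Metric.tendsto_atTop]
    intro ε hε
    set δ : ℝ := min (ε/2) (1/2) with hδdef
    have hδ0 : 0 < δ := lt_min (by linarith) (by norm_num)
    have hδle : δ ≤ 1/2 := min_le_right _ _
    have hδε : δ < ε := (min_le_left _ _).trans_lt (by linarith)
    refine ⟨max 1 (10 * Real.exp 16 / δ), fun ν h => ?_⟩
    have hν1 : (1:ℝ) ≤ ν := (le_max_left _ _).trans h
    have hν2 : 10 * Real.exp 16 / δ ≤ ν := (le_max_right _ _).trans h
    obtain ⟨_, hL, hU⟩ := main_struct hδ0 hδle hν1 hν2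
    have hpos : (0:ℝ) < 4*(ν+1) := by linarith
    rw [Real.dist_eq]
    have h1 : 1 - δ ≤ rStarPhi ν / (4*(ν+1)) := by
      rw [le_div_iff₀ hpos]
      rw [rStarPhi]
      linarith
    have h2 : rStarPhi ν / (4*(ν+1)) ≤ 1 + δ := by
      rw [div_le_iff₀ hpos]
      rw [rStarPhi]
      linarith
    have : |rStarPhi ν / (4*(ν+1)) - 1| ≤ δ := abs_le.mpr ⟨by linarith, by linarith⟩
    calc |rStarPhi ν / (4 * (ν+1)) - 1| ≤ δ := this
      _ < ε := hδε
end
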